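/- arXiv:2311.04697 — 7 statements merged into one kernel-verified Lean document; each statement's English description precedes it below -/
import Mathlib

section
/- Let f(x,y,z,u) = 8x² + 12xy + 18y² + 12yz + 12z² + 12xu + 12u². For every nonzero (x,y,z,u) ∈ ℤ⁴ one has f(x,y,z,u) ∈ ℋ; that is, f(x,y,z,u) ≥ 8 and f(x,y,z,u) ≡ 0 or 2 (mod 6). In particular, neither 2 nor 6 is a value of f on nonzero vectors. -/
def fForm (x y z u : ℤ) : ℤ :=
  8*x^2 + 12*x*y + 18*y^2 + 12*y*z + 12*z^2 + 12*x*u + 12*u^2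

/-!
Modulo 6 the form reduces to `2x²`, and `2x² ≡ 0` or `2 (mod 6)` because `x² ≡ 0` or `1 (mod 3)`.
For the lower bound, completing squares gives
`5 f = 15 (x + 2u)² + 15 (y + 2z)² + (5x + 6y)² + 39 y²`, so `f < 8` forces `y = 0` and then `z = 0`,
leaving the binary form `5x² + 3(x + 2u)²`, which is at least `8` away from the origin.
-/

lemma two_mul_sq_emod_six (x : ℤ) : 2 * x ^ 2 % 6 = 0 ∨ 2 * x ^ 2 % 6 = 2 := by
  have h : 2 * x ^ 2 % 6 = 2 * (x % 6) ^ 2 % 6 := by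
    rw [pow_two, pow_two, Int.mul_emod, Int.mul_emod x x, Int.mul_emod 2 ((x % 6) * (x % 6))]
  have h0 : 0 ≤ x % 6 := Int.emod_nonneg x (by norm_num)
  have h6 : x % 6 < 6 := Int.emod_lt_of_pos x (by norm_num)
  rw [h]
  interval_cases x % 6 <;> decide

lemma fForm_emod_six (x y z u : ℤ) : fForm x y z u % 6 = 2 * x ^ 2 % 6 := by
  have h : fForm x y z u = 2 * x ^ 2 + 6 * (x^2 + 2*x*y + 3*y^2 + 2*y*z + 2*z^2 + 2*x*u + 2*u^2) := by
    unfold fForm; ring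
  rw [h, Int.add_mul_emod_self_left]

lemma five_mul_fForm (x y z u : ℤ) :
    5 * fForm x y z u = 15 * (x + 2*u)^2 + 15 * (y + 2*z)^2 + (5*x + 6*y)^2 + 39 * y^2 := by
  unfold fForm; ring

lemma fForm_of_y_eq_zero (x z u : ℤ) : fForm x 0 z u = 5 * x^2 + 3 * (x + 2*u)^2 + 12 * z^2 := by
  unfold fForm; ring

lemma eq_zero_of_sq_lt_one {a : ℤ} (h : a ^ 2 < 1) : a = 0 :=
  Int.abs_lt_one_iff.mp (sq_lt_one_iff_abs_lt_one a |>.mp h)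

lemma eight_le_five_mul_sq_add_three_mul_sq {x u : ℤ} (h : ¬(x = 0 ∧ u = 0)) :
    8 ≤ 5 * x^2 + 3 * (x + 2*u)^2 := by
  rcases eq_or_ne x 0 with rfl | hx
  · have hu : u ≠ 0 := by tauto
    have : 0 < u ^ 2 := by positivity
    linarith
  rcases eq_or_ne (x + 2*u) 0 with hxu | hxu
  · have hu : u ≠ 0 := by omega
    obtain rfl : x = -2 * u := by omega
    have : 0 < u ^ 2 := by positivity
    linarith
  · have : 0 < x ^ 2 := by positivity
    have : 0 < (x + 2*u) ^ 2 := by positivity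
    linarith

lemma eight_le_fForm {x y z u : ℤ} (h : ¬(x = 0 ∧ y = 0 ∧ z = 0 ∧ u = 0)) : 8 ≤ fForm x y z u := by
  by_contra! hlt
  have hy : y = 0 := eq_zero_of_sq_lt_one (by
    nlinarith [five_mul_fForm x y z u, sq_nonneg (x + 2*u), sq_nonneg (y + 2*z), sq_nonneg (5*x + 6*y)])
  subst hy
  rw [fForm_of_y_eq_zero] at hlt
  have hz : z = 0 := eq_zero_of_sq_lt_one (by nlinarith [sq_nonneg x, sq_nonneg (x + 2*u)])
  subst hz
  have := eight_le_five_mul_sq_add_three_mul_sq (x := x) (u := u) (by tauto)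
  linarith

/-- every value of f on a nonzero vector lies in the Hassett set:
it is at least 8 and congruent to 0 or 2 mod 6. -/
theorem fForm_value_mem_Hassett :
    ∀ x y z u : ℤ, ¬(x = 0 ∧ y = 0 ∧ z = 0 ∧ u = 0) →
      8 ≤ fForm x y z u ∧ (fForm x y z u % 6 = 0 ∨ fForm x y z u % 6 = 2) := by
  intro x y z u h
  exact ⟨eight_le_fForm h, fForm_emod_six x y z u ▸ two_mul_sq_emod_six x⟩
end

section
/- The rank seven quadratic form g(x,y,z,a,b,c,e) = 8x² + 6xy + 12y² + 18z² + 12(a² + b² + c² + e²) has image on nonzero integer vectors exactly ℋ, and every element of ℋ is the value of g at a primitive vector of ℤ⁷. In particular, ℋ is primitively-integrally-formally-supported. -/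
/-- The rank seven quadratic form
g(x,y,z,a,b,c,e) = 8x² + 6xy + 12y² + 18z² + 12(a² + b² + c² + e²). -/
def gForm (x y z a b c e : ℤ) : ℤ :=
  8*x^2 + 6*x*y + 12*y^2 + 18*z^2 + 12*(a^2 + b^2 + c^2 + e^2)

/-- The Hassett set ℋ = {d ∈ ℕ : d > 6 and d ≡ 0 or 2 (mod 6)}. -/
def HassettSet : Set ℕ := {d | 6 < d ∧ (d % 6 = 0 ∨ d % 6 = 2)}

lemma one_le_sq {w : ℤ} (h : w ≠ 0) : 1 ≤ w^2 := by
  rcases h.lt_or_gt with h | h <;> nlinarith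

lemma sq_mod3 (x : ℤ) : x^2 % 3 = 0 ∨ x^2 % 3 = 1 := by
  have h : x^2 % 3 = (x % 3) * (x % 3) % 3 := by rw [sq, Int.mul_emod]
  have h3 : x % 3 = 0 ∨ x % 3 = 1 ∨ x % 3 = 2 := by omega
  rcases h3 with h3 | h3 | h3 <;> rw [h3] at h <;> norm_num at h <;> omega

/-- four squares over ℤ -/
lemma four_sq (S : ℕ) : ∃ a b c e : ℤ, a^2 + b^2 + c^2 + e^2 = (S : ℤ) := by
  obtain ⟨a, b, c, e, h⟩ := Nat.sum_four_squares S
  exact ⟨a, b, c, e, by exact_mod_cast congrArg (Nat.cast : ℕ → ℤ) h⟩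

lemma hassett_prim (d : ℕ) (h6 : 6 < d) (hm : d % 6 = 0 ∨ d % 6 = 2) :
    ∃ x y z a b c e : ℤ,
      Int.gcd (Int.gcd (Int.gcd (Int.gcd (Int.gcd (Int.gcd x y) z) a) b) c) e = 1 ∧
      gForm x y z a b c e = (d : ℤ) := by
  rcases hm with hm | hm
  · -- d = 6*m, m ≥ 2
    rcases Nat.even_or_odd (d / 6) with ⟨s, hs⟩ | ⟨s, hs⟩
    · -- m = 2s, s ≥ 1; d = 12s ; use (0,1,0,...) with S = s-1
      have hs1 : 1 ≤ s := by omega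
      obtain ⟨a, b, c, e, hS⟩ := four_sq (s - 1)
      refine ⟨0, 1, 0, a, b, c, e, by simp [Int.one_gcd], ?_⟩
      have hd : (d : ℤ) = 12 * (s : ℤ) := by omega
      have hc : ((s - 1 : ℕ) : ℤ) = (s : ℤ) - 1 := by omega
      rw [hc] at hS
      unfold gForm
      linarith [hS, hd]
    · -- m = 2s+1, m ≥ 3 so s ≥ 1; use (0,0,1,...) with S = s-1
      have hs1 : 1 ≤ s := by omega
      obtain ⟨a, b, c, e, hS⟩ := four_sq (s - 1)
      refine ⟨0, 0, 1, a, b, c, e, by simp [Int.one_gcd], ?_⟩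
      have hd : (d : ℤ) = 12 * (s : ℤ) + 6 := by omega
      have hc : ((s - 1 : ℕ) : ℤ) = (s : ℤ) - 1 := by omega
      rw [hc] at hS
      unfold gForm
      linarith [hS, hd]
  · -- d = 6k + 8, k ≥ 0
    by_cases h14 : d = 14
    · refine ⟨1, -1, 0, 0, 0, 0, 0, by decide, ?_⟩
      subst h14; unfold gForm; norm_num
    · rcases Nat.even_or_odd ((d - 8) / 6) with ⟨s, hs⟩ | ⟨s, hs⟩
      · -- k = 2s ; use (1,0,0,...) with S = s
        obtain ⟨a, b, c, e, hS⟩ := four_sq s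
        refine ⟨1, 0, 0, a, b, c, e, by simp [Int.one_gcd], ?_⟩
        have hd : (d : ℤ) = 12 * (s : ℤ) + 8 := by omega
        unfold gForm
        linarith [hS, hd]
      · -- k = 2s+1, k ≠ 1 so s ≥ 1 ; use (1,0,1,...) with S = s-1
        have hs1 : 1 ≤ s := by omega
        obtain ⟨a, b, c, e, hS⟩ := four_sq (s - 1)
        refine ⟨1, 0, 1, a, b, c, e, by simp [Int.one_gcd], ?_⟩
        have hd : (d : ℤ) = 12 * (s : ℤ) + 14 := by omega
        have hc : ((s - 1 : ℕ) : ℤ) = (s : ℤ) - 1 := by omega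
        rw [hc] at hS
        unfold gForm
        linarith [hS, hd]

/-- the image of g on nonzero integer vectors is exactly ℋ, and every
element of ℋ is the value of g at a primitive vector of ℤ⁷. -/
theorem gForm_image_eq_Hassett_and_primitive :
    (∀ d : ℕ,
      (∃ x y z a b c e : ℤ,
        ¬(x = 0 ∧ y = 0 ∧ z = 0 ∧ a = 0 ∧ b = 0 ∧ c = 0 ∧ e = 0) ∧
        gForm x y z a b c e = (d : ℤ)) ↔ d ∈ HassettSet) ∧
    (∀ d : ℕ, d ∈ HassettSet →
      ∃ x y z a b c e : ℤ,
        Int.gcd (Int.gcd (Int.gcd (Int.gcd (Int.gcd (Int.gcd x y) z) a) b) c) e = 1 ∧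
        gForm x y z a b c e = (d : ℤ)) := by
  constructor
  · intro d
    constructor
    · rintro ⟨x, y, z, a, b, c, e, hnz, hval⟩
      have hR : (0:ℤ) ≤ 18*z^2 + 12*(a^2 + b^2 + c^2 + e^2) := by positivity
      have h8 : (8:ℤ) ≤ gForm x y z a b c e := by
        unfold gForm
        by_cases hy : y = 0
        · by_cases hx : x = 0
          · subst hx; subst hy
            have hone : z ≠ 0 ∨ a ≠ 0 ∨ b ≠ 0 ∨ c ≠ 0 ∨ e ≠ 0 := by tauto
            rcases hone with h | h | h | h | h <;>
              nlinarith [one_le_sq h, sq_nonneg z, sq_nonneg a, sq_nonneg b,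
                sq_nonneg c, sq_nonneg e]
          · subst hy
            nlinarith [one_le_sq hx, hR]
        · nlinarith [one_le_sq hy, sq_nonneg (8*x + 3*y), hR]
      have hkey : (d : ℤ) = 2 * x^2 +
          6 * (x^2 + x*y + 2*y^2 + 3*z^2 + 2*(a^2 + b^2 + c^2 + e^2)) := by
        rw [← hval]; unfold gForm; ring
      have hx3 := sq_mod3 x
      rw [hval] at h8
      constructor
      · omega
      · generalize x^2 = s at hkey hx3
        generalize (x^2 + x*y + 2*y^2 + 3*z^2 + 2*(a^2 + b^2 + c^2 + e^2)) = K at hkey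
        omega
    · intro hd
      obtain ⟨x, y, z, a, b, c, e, hg, hval⟩ := hassett_prim d hd.1 hd.2
      refine ⟨x, y, z, a, b, c, e, ?_, hval⟩
      rintro ⟨rfl, rfl, rfl, rfl, rfl, rfl, rfl⟩
      simp at hg
  · intro d hd
    exact hassett_prim d hd.1 hd.2
end

section
/- Let n ≥ 1 and let A be a symmetric positive-definite n×n integer matrix, defining the quadratic form f(v) = vᵀAv, and suppose that f(v) ∈ ℋ for every nonzero v ∈ ℤⁿ. Then there exist a symmetric positive-definite (n+1)×(n+1) integer matrix G, a vector 𝔬 ∈ ℤⁿ⁺¹, and an injective ℤ-linear map ι : ℤⁿ → ℤⁿ⁺¹ such that: (i) 𝔬ᵀG𝔬 = 3; (ii) wᵀGw is even for every w ∈ ℤⁿ⁺¹ with 𝔬ᵀGw = 0; (iii) there is no w ∈ ℤⁿ⁺¹ with wᵀGw = 2; and (iv) f(v) = 3·(ι v)ᵀG(ι v) − (𝔬ᵀG(ι v))² for all v ∈ ℤⁿ. -/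
/-!
Modulo 3 the values of `f` lie in `{0, 2}`, so `-A` reduces to a symmetric form over `𝔽₃` all of
whose values are squares; polarizing around a vector of value `1` shows that such a form is
`c cᵀ`. Hence `A = 3 B - c cᵀ` with `B` symmetric and integral, and we take
`G = [[3, cᵀ], [c, B]]`, `𝔬 = e₀` and `ι v = (0, v)`. Completing the square gives
`3 wᵀGw = (𝔬ᵀGw)² + f(w')`, where `w'` is `w` without its first coordinate, and positivity, evenness
on `𝔬^⊥` and the absence of roots all follow from `f(w') ∈ ℋ ∪ {0}`.
-/

open Matrix

namespace Matrix

section QuadraticForm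

variable {ι R : Type*} [Fintype ι] [CommRing R] {M : Matrix ι ι R}

lemma IsSymm.dotProduct_mulVec_comm (hM : M.IsSymm) (v w : ι → R) :
    v ⬝ᵥ M *ᵥ w = w ⬝ᵥ M *ᵥ v := by
  rw [dotProduct_mulVec, ← mulVec_transpose, hM.eq, dotProduct_comm]

lemma IsSymm.add_dotProduct_mulVec_add (hM : M.IsSymm) (v w : ι → R) :
    (v + w) ⬝ᵥ M *ᵥ (v + w) = v ⬝ᵥ M *ᵥ v + 2 * (v ⬝ᵥ M *ᵥ w) + w ⬝ᵥ M *ᵥ w := by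
  rw [mulVec_add, add_dotProduct, dotProduct_add, dotProduct_add, hM.dotProduct_mulVec_comm w v]
  ring

lemma IsSymm.sub_dotProduct_mulVec_sub (hM : M.IsSymm) (v w : ι → R) :
    (v - w) ⬝ᵥ M *ᵥ (v - w) = v ⬝ᵥ M *ᵥ v - 2 * (v ⬝ᵥ M *ᵥ w) + w ⬝ᵥ M *ᵥ w := by
  rw [sub_eq_add_neg, hM.add_dotProduct_mulVec_add, mulVec_neg, dotProduct_neg, neg_dotProduct,
    dotProduct_neg, neg_neg]
  ring

lemma IsSymm.eq_vecMulVec_of_dotProduct_mulVec_eq_sq (hM : M.IsSymm) (h2 : IsUnit (2 : R))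
    {c : ι → R} (hc : ∀ v, v ⬝ᵥ M *ᵥ v = (v ⬝ᵥ c) ^ 2) : M = vecMulVec c c := by
  classical
  ext i j
  have h := hM.add_dotProduct_mulVec_add (Pi.single i 1) (Pi.single j 1)
  simp only [hc, add_dotProduct, single_one_dotProduct] at h
  refine h2.mul_left_cancel ?_
  simp only [mulVec_single_one, col_apply, vecMulVec_apply] at h ⊢
  linear_combination -h

end QuadraticForm

section ZModThree

variable {ι : Type*} [Fintype ι] {M : Matrix ι ι (ZMod 3)}

lemma IsSymm.dotProduct_mulVec_eq_sq_of_isSquare (hM : M.IsSymm)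
    (hq : ∀ v, IsSquare (v ⬝ᵥ M *ᵥ v)) {v₀ : ι → ZMod 3} (hv₀ : v₀ ⬝ᵥ M *ᵥ v₀ = 1)
    (v : ι → ZMod 3) : v ⬝ᵥ M *ᵥ v = (v ⬝ᵥ M *ᵥ v₀) ^ 2 := by
  -- the squares of `𝔽₃` are `0` and `1`, and `v ± v₀` have values `a ± 2x + 1`
  have key : ∀ a x : ZMod 3, IsSquare a → IsSquare (a + 2 * x + 1) → IsSquare (a - 2 * x + 1) →
      a = x ^ 2 := by decide
  refine key _ _ (hq v) ?_ ?_
  · simpa only [hM.add_dotProduct_mulVec_add, hv₀] using hq (v + v₀)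
  · simpa only [hM.sub_dotProduct_mulVec_sub, hv₀] using hq (v - v₀)

lemma IsSymm.exists_eq_vecMulVec_of_isSquare (hM : M.IsSymm)
    (hq : ∀ v, IsSquare (v ⬝ᵥ M *ᵥ v)) : ∃ c, M = vecMulVec c c := by
  have h2 : IsUnit (2 : ZMod 3) := .of_mul_eq_one 2 (by decide)
  by_cases hex : ∃ v₀, v₀ ⬝ᵥ M *ᵥ v₀ = 1
  · obtain ⟨v₀, hv₀⟩ := hex
    refine ⟨M *ᵥ v₀, hM.eq_vecMulVec_of_dotProduct_mulVec_eq_sq h2 fun v => ?_⟩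
    exact hM.dotProduct_mulVec_eq_sq_of_isSquare hq hv₀ v
  · have hsq : ∀ x : ZMod 3, IsSquare x → x ≠ 1 → x = 0 ^ 2 := by decide
    refine ⟨0, hM.eq_vecMulVec_of_dotProduct_mulVec_eq_sq h2 fun v => ?_⟩
    rw [dotProduct_zero]
    exact hsq _ (hq v) fun h => hex ⟨v, h⟩

end ZModThree

variable {ι : Type*} [Fintype ι] in
lemma IsSymm.exists_eq_three_smul_sub_vecMulVec {A : Matrix ι ι ℤ} (hA : A.IsSymm)
    (hA3 : ∀ v, (v ⬝ᵥ A *ᵥ v) % 3 ≠ 1) :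
    ∃ (c : ι → ℤ) (B : Matrix ι ι ℤ), B.IsSymm ∧ A = (3 : ℤ) • B - vecMulVec c c := by
  have hsq : ∀ v : ι → ZMod 3, IsSquare (v ⬝ᵥ -A.map (↑) *ᵥ v) := by
    intro v
    obtain ⟨u, rfl⟩ := ZMod.intCast_surjective.comp_left v
    have hne : ((u ⬝ᵥ A *ᵥ u : ℤ) : ZMod 3) ≠ 1 := by
      rw [← Int.cast_one, Ne, ZMod.intCast_eq_intCast_iff']
      exact hA3 u
    have hcast : ((u ⬝ᵥ A *ᵥ u : ℤ) : ZMod 3) = ((↑) ∘ u) ⬝ᵥ A.map (↑) *ᵥ ((↑) ∘ u) := by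
      simp [dotProduct, mulVec]
    have hneg : ∀ x : ZMod 3, x ≠ 1 → IsSquare (-x) := by decide
    rw [neg_mulVec, dotProduct_neg, ← hcast]
    exact hneg _ hne
  obtain ⟨c', hc'⟩ := (hA.map _).neg.exists_eq_vecMulVec_of_isSquare hsq
  obtain ⟨c, rfl⟩ := ZMod.intCast_surjective.comp_left c'
  have hdvd : ∀ i j, (3 : ℤ) ∣ A i j + c i * c j := fun i j => by
    refine (ZMod.intCast_zmod_eq_zero_iff_dvd _ 3).1 ?_
    have := congrFun₂ hc' i j
    simp only [neg_apply, map_apply, vecMulVec_apply, Function.comp_apply] at this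
    push_cast
    linear_combination -this
  choose B hB using hdvd
  refine ⟨c, of B, ?_, ?_⟩
  · ext i j
    have := hA.apply i j
    simp only [transpose_apply, of_apply]
    linarith [hB i j, hB j i, mul_comm (c i) (c j)]
  · ext i j
    simp only [sub_apply, smul_apply, of_apply, vecMulVec_apply, smul_eq_mul]
    linarith [hB i j]

section Bordered

variable {n : ℕ} {α : Type*}

/-- The block matrix `[[a, cᵀ], [c, B]]`. -/
def bordered (a : α) (c : Fin n → α) (B : Matrix (Fin n) (Fin n) α) :
    Matrix (Fin (n + 1)) (Fin (n + 1)) α :=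
  of (vecCons (vecCons a c) fun i => vecCons (c i) (B i))

lemma IsSymm.bordered (a : α) (c : Fin n → α) {B : Matrix (Fin n) (Fin n) α} (hB : B.IsSymm) :
    (Matrix.bordered a c B).IsSymm := by
  ext i j
  refine Fin.cases ?_ (fun i => ?_) i <;> refine Fin.cases ?_ (fun j => ?_) j <;>
    simp [Matrix.bordered, hB.apply]

variable {R : Type*} [CommRing R] (a : R) (c : Fin n → R) (B : Matrix (Fin n) (Fin n) R)

lemma bordered_mulVec_cons (t : R) (u : Fin n → R) :
    bordered a c B *ᵥ vecCons t u = vecCons (a * t + c ⬝ᵥ u) (t • c + B *ᵥ u) := by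
  simp only [bordered, cons_mulVec, cons_dotProduct_cons]
  congr 1
  ext i
  simp [mulVec, mul_comm]

lemma cons_one_zero_dotProduct_bordered_mulVec_cons (t : R) (u : Fin n → R) :
    vecCons 1 0 ⬝ᵥ bordered a c B *ᵥ vecCons t u = a * t + c ⬝ᵥ u := by
  simp [bordered_mulVec_cons]

lemma mul_cons_dotProduct_bordered_mulVec_cons (t : R) (u : Fin n → R) :
    a * (vecCons t u ⬝ᵥ bordered a c B *ᵥ vecCons t u) =
      (a * t + c ⬝ᵥ u) ^ 2 + u ⬝ᵥ (a • B - vecMulVec c c) *ᵥ u := by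
  rw [bordered_mulVec_cons, cons_dotProduct_cons, dotProduct_add, dotProduct_smul, sub_mulVec,
    smul_mulVec, dotProduct_sub, dotProduct_smul, vecMulVec_mulVec]
  simp only [smul_eq_mul, MulOpposite.smul_eq_mul_unop, MulOpposite.unop_op, dotProduct_smul,
    dotProduct_comm u c]
  ring

end Bordered

section BorderedOverOrderedRing

variable {n : ℕ} {R : Type*} [CommRing R] [LinearOrder R] [IsStrictOrderedRing R]
  {a : R} {c : Fin n → R} {B : Matrix (Fin n) (Fin n) R}

lemma dotProduct_bordered_mulVec_pos (ha : 0 < a)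
    (hB : ∀ u, u ≠ 0 → 0 < u ⬝ᵥ (a • B - vecMulVec c c) *ᵥ u) (w : Fin (n + 1) → R)
    (hw : w ≠ 0) : 0 < w ⬝ᵥ bordered a c B *ᵥ w := by
  obtain ⟨t, u, rfl⟩ : ∃ t u, w = vecCons t u := ⟨_, _, (cons_head_tail w).symm⟩
  have key := mul_cons_dotProduct_bordered_mulVec_cons a c B t u
  refine pos_of_mul_pos_right (key ▸ ?_) ha.le
  rcases eq_or_ne u 0 with rfl | hu
  · have ht : t ≠ 0 := by rintro rfl; exact hw (by simp)
    simp only [dotProduct_zero, mulVec_zero, add_zero]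
    positivity
  · exact add_pos_of_nonneg_of_pos (sq_nonneg _) (hB u hu)

end BorderedOverOrderedRing

section Hassett

variable {n : ℕ} {A : Matrix (Fin n) (Fin n) ℤ} {c : Fin n → ℤ} {B : Matrix (Fin n) (Fin n) ℤ}

lemma dotProduct_bordered_three_mulVec_ne_two (hAB : A = (3 : ℤ) • B - vecMulVec c c)
    (hA : ∀ u, u ≠ 0 → 6 < u ⬝ᵥ A *ᵥ u) (w : Fin (n + 1) → ℤ) :
    w ⬝ᵥ bordered 3 c B *ᵥ w ≠ 2 := by
  obtain ⟨t, u, rfl⟩ : ∃ t u, w = vecCons t u := ⟨_, _, (cons_head_tail w).symm⟩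
  have key := mul_cons_dotProduct_bordered_mulVec_cons 3 c B t u
  rw [← hAB] at key
  intro h2
  rcases eq_or_ne u 0 with rfl | hu
  · simp only [h2, dotProduct_zero, add_zero, mulVec_zero] at key
    rw [mul_pow] at key
    omega
  · nlinarith [hA u hu, sq_nonneg (3 * t + c ⬝ᵥ u)]

lemma two_dvd_dotProduct_bordered_three_mulVec (hAB : A = (3 : ℤ) • B - vecMulVec c c)
    (hA : ∀ u, 2 ∣ u ⬝ᵥ A *ᵥ u) (w : Fin (n + 1) → ℤ)
    (hw : vecCons 1 0 ⬝ᵥ bordered 3 c B *ᵥ w = 0) : 2 ∣ w ⬝ᵥ bordered 3 c B *ᵥ w := by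
  obtain ⟨t, u, rfl⟩ : ∃ t u, w = vecCons t u := ⟨_, _, (cons_head_tail w).symm⟩
  have key := mul_cons_dotProduct_bordered_mulVec_cons 3 c B t u
  rw [← hAB, ← cons_one_zero_dotProduct_bordered_mulVec_cons, hw] at key
  have := hA u
  omega

end Hassett

end Matrix

theorem exists_overlattice_with_distinguished_element_general
    (n : ℕ) (A : Matrix (Fin n) (Fin n) ℤ) (hA : A.IsSymm)
    (hH : ∀ v : Fin n → ℤ, v ≠ 0 →
      6 < v ⬝ᵥ A.mulVec v ∧
        ((v ⬝ᵥ A.mulVec v) % 6 = 0 ∨ (v ⬝ᵥ A.mulVec v) % 6 = 2)) :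
    ∃ (G : Matrix (Fin (n + 1)) (Fin (n + 1)) ℤ) (o : Fin (n + 1) → ℤ)
      (ι : (Fin n → ℤ) →ₗ[ℤ] (Fin (n + 1) → ℤ)),
      Function.Injective ι ∧
      G.IsSymm ∧
      (∀ w : Fin (n + 1) → ℤ, w ≠ 0 → 0 < w ⬝ᵥ G.mulVec w) ∧
      o ⬝ᵥ G.mulVec o = 3 ∧
      (∀ w : Fin (n + 1) → ℤ, o ⬝ᵥ G.mulVec w = 0 → 2 ∣ w ⬝ᵥ G.mulVec w) ∧
      (¬ ∃ w : Fin (n + 1) → ℤ, w ⬝ᵥ G.mulVec w = 2) ∧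
      (∀ v : Fin n → ℤ,
        v ⬝ᵥ A.mulVec v =
          3 * ((ι v) ⬝ᵥ G.mulVec (ι v)) - (o ⬝ᵥ G.mulVec (ι v)) ^ 2) := by
  have hA6 : ∀ v, v ⬝ᵥ A *ᵥ v = 0 ∨ (v ⬝ᵥ A *ᵥ v) % 6 = 0 ∨ (v ⬝ᵥ A *ᵥ v) % 6 = 2 := by
    intro v
    rcases eq_or_ne v 0 with rfl | hv
    · simp
    · exact Or.inr (hH v hv).2
  obtain ⟨c, B, hB, hAB⟩ :=
    hA.exists_eq_three_smul_sub_vecMulVec fun v => by have := hA6 v; omega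
  refine ⟨bordered 3 c B, vecCons 1 0, LinearMap.vecCons 0 LinearMap.id,
    fun u v h => (vecCons_inj.1 h).2, hB.bordered 3 c,
    dotProduct_bordered_mulVec_pos three_pos fun u hu => hAB ▸ by linarith [(hH u hu).1],
    by simpa using cons_one_zero_dotProduct_bordered_mulVec_cons (3 : ℤ) c B 1 0,
    two_dvd_dotProduct_bordered_three_mulVec hAB fun u => by have := hA6 u; omega,
    fun ⟨w, hw⟩ => dotProduct_bordered_three_mulVec_ne_two hAB (fun u hu => (hH u hu).1) w hw,
    fun v => ?_⟩
  have key := mul_cons_dotProduct_bordered_mulVec_cons 3 c B 0 v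
  rw [← hAB] at key
  simp only [LinearMap.vecCons_apply, LinearMap.zero_apply, LinearMap.id_apply,
    cons_one_zero_dotProduct_bordered_mulVec_cons]
  linarith

/-- if a positive-definite integer-matrix quadratic form in n ≥ 1
variables takes all its nonzero values in the Hassett set ℋ, then it arises as
`v ↦ 3⟨ιv,ιv⟩ − ⟨𝔬,ιv⟩²` for a positive-definite lattice of rank n+1 with a
distinguished element 𝔬 and no roots. -/
theorem exists_overlattice_with_distinguished_element
    (n : ℕ) (hn : 1 ≤ n) (A : Matrix (Fin n) (Fin n) ℤ) (hA : A.IsSymm)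
    (hApos : ∀ v : Fin n → ℤ, v ≠ 0 → 0 < v ⬝ᵥ A.mulVec v)
    (hH : ∀ v : Fin n → ℤ, v ≠ 0 →
      6 < v ⬝ᵥ A.mulVec v ∧
        ((v ⬝ᵥ A.mulVec v) % 6 = 0 ∨ (v ⬝ᵥ A.mulVec v) % 6 = 2)) :
    ∃ (G : Matrix (Fin (n + 1)) (Fin (n + 1)) ℤ) (o : Fin (n + 1) → ℤ)
      (ι : (Fin n → ℤ) →ₗ[ℤ] (Fin (n + 1) → ℤ)),
      Function.Injective ι ∧
      G.IsSymm ∧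
      (∀ w : Fin (n + 1) → ℤ, w ≠ 0 → 0 < w ⬝ᵥ G.mulVec w) ∧
      o ⬝ᵥ G.mulVec o = 3 ∧
      (∀ w : Fin (n + 1) → ℤ, o ⬝ᵥ G.mulVec w = 0 → 2 ∣ w ⬝ᵥ G.mulVec w) ∧
      (¬ ∃ w : Fin (n + 1) → ℤ, w ⬝ᵥ G.mulVec w = 2) ∧
      (∀ v : Fin n → ℤ,
        v ⬝ᵥ A.mulVec v =
          3 * ((ι v) ⬝ᵥ G.mulVec (ι v)) - (o ⬝ᵥ G.mulVec (ι v)) ^ 2) :=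
  exists_overlattice_with_distinguished_element_general n A hA hH
end

section
/- Let G be a symmetric positive-definite m×m integer matrix and 𝔬 ∈ ℤᵐ a vector with 𝔬ᵀG𝔬 = 3 such that wᵀGw is even for every w ∈ ℤᵐ with 𝔬ᵀGw = 0, and such that no vector w ∈ ℤᵐ satisfies wᵀGw = 2. Then for every v ∈ ℤᵐ that is not a rational multiple of 𝔬, one has 3·(vᵀGv) − (𝔬ᵀGv)² ∈ ℋ. -/
open Matrix

/-- for a positive-definite integer lattice G of rank m with a
distinguished element 𝔬 (norm 3, even orthogonal complement) and no roots,
the discriminant 3⟨v,v⟩ − ⟨𝔬,v⟩² of the span of 𝔬 and any v not a rational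
multiple of 𝔬 lies in the Hassett set ℋ. -/
theorem disc_span_mem_Hassett
    (m : ℕ) (G : Matrix (Fin m) (Fin m) ℤ) (hG : G.IsSymm)
    (hGpos : ∀ v : Fin m → ℤ, v ≠ 0 → 0 < v ⬝ᵥ G.mulVec v)
    (o : Fin m → ℤ)
    (ho : o ⬝ᵥ G.mulVec o = 3)
    (heven : ∀ w : Fin m → ℤ, o ⬝ᵥ G.mulVec w = 0 → 2 ∣ w ⬝ᵥ G.mulVec w)
    (hnoroots : ¬ ∃ w : Fin m → ℤ, w ⬝ᵥ G.mulVec w = 2) :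
    ∀ v : Fin m → ℤ, (¬ ∃ a b : ℤ, b ≠ 0 ∧ b • v = a • o) →
      6 < 3 * (v ⬝ᵥ G.mulVec v) - (o ⬝ᵥ G.mulVec v) ^ 2 ∧
      ((3 * (v ⬝ᵥ G.mulVec v) - (o ⬝ᵥ G.mulVec v) ^ 2) % 6 = 0 ∨
        (3 * (v ⬝ᵥ G.mulVec v) - (o ⬝ᵥ G.mulVec v) ^ 2) % 6 = 2) := by
  have hsym : ∀ x y : Fin m → ℤ, x ⬝ᵥ G.mulVec y = y ⬝ᵥ G.mulVec x := by
    intro x y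
    rw [Matrix.dotProduct_mulVec, ← Matrix.mulVec_transpose, hG.eq, dotProduct_comm]
  have hlin : ∀ (s t : ℤ) (x y z : Fin m → ℤ),
      z ⬝ᵥ G.mulVec (s • x + t • y) = s * (z ⬝ᵥ G.mulVec x) + t * (z ⬝ᵥ G.mulVec y) := by
    intro s t x y z
    simp only [Matrix.mulVec_add, Matrix.mulVec_smul, dotProduct_add,
      dotProduct_smul, smul_eq_mul]
  have hexp : ∀ (s t : ℤ) (x y : Fin m → ℤ),
      (s • x + t • y) ⬝ᵥ G.mulVec (s • x + t • y) =
        s ^ 2 * (x ⬝ᵥ G.mulVec x) + 2 * s * t * (x ⬝ᵥ G.mulVec y)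
          + t ^ 2 * (y ⬝ᵥ G.mulVec y) := by
    intro s t x y
    rw [hlin, hsym _ x, hsym _ y, hlin, hlin, hsym y x]
    ring
  intro v hv
  set a : ℤ := o ⬝ᵥ G.mulVec v with ha
  set q : ℤ := v ⬝ᵥ G.mulVec v with hq
  -- the auxiliary vector w = 3v - a·o
  set w : Fin m → ℤ := (3 : ℤ) • v + (-a) • o with hwdef
  have hwq : w ⬝ᵥ G.mulVec w = 3 * (3 * q - a ^ 2) := by
    rw [hwdef, hexp, ho, hsym v o, ← ha, ← hq]; ring
  have hwo : o ⬝ᵥ G.mulVec w = 0 := by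
    rw [hwdef, hlin, ho, ← ha]; ring
  have hwne : w ≠ 0 := by
    intro h0
    apply hv
    refine ⟨a, 3, by norm_num, ?_⟩
    have h1 : (3 : ℤ) • v - a • o = 0 := by
      rw [sub_eq_add_neg, ← neg_smul]; exact h0
    exact sub_eq_zero.mp h1
  have hpos : 0 < 3 * (3 * q - a ^ 2) := by
    rw [← hwq]; exact hGpos w hwne
  have heven' : 2 ∣ 3 * (3 * q - a ^ 2) := by
    rw [← hwq]; exact heven w hwo
  -- square mod 3
  have hp : a ^ 2 % 3 = (a % 3) * (a % 3) % 3 := by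
    rw [pow_two, Int.mul_emod]
  have hsq3 : a ^ 2 % 3 = 0 ∨ a ^ 2 % 3 = 1 := by
    have h3 : a % 3 = 0 ∨ a % 3 = 1 ∨ a % 3 = 2 := by omega
    rcases h3 with h3 | h3 | h3 <;> rw [hp, h3] <;> norm_num
  -- discriminant is not 2
  have hd2 : 3 * q - a ^ 2 ≠ 2 := by
    intro hd
    have hq3 : 3 * q = a ^ 2 + 2 := by omega
    obtain ⟨k, e, hke, hu⟩ : ∃ k e : ℤ, a = 3 * k + e ∧ (e = 1 ∨ e = -1) := by
      rcases hsq3 with h | h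
      · omega
      · have h3 : a % 3 = 1 ∨ a % 3 = 2 := by
          have h0 : a % 3 = 0 ∨ a % 3 = 1 ∨ a % 3 = 2 := by omega
          rcases h0 with h0 | h0 | h0
          · rw [hp, h0] at h; norm_num at h
          · exact Or.inl h0
          · exact Or.inr h0
        rcases h3 with h0 | h0
        · exact ⟨a / 3, 1, by omega, Or.inl rfl⟩
        · exact ⟨a / 3 + 1, -1, by omega, Or.inr rfl⟩
    apply hnoroots
    refine ⟨(1 + e * k) • o + (-e) • v, ?_⟩
    have hval := hexp (1 + e * k) (-e) o v
    rw [ho, ← ha, ← hq] at hval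
    have h3u : 3 * (((1 + e * k) • o + (-e) • v) ⬝ᵥ G.mulVec ((1 + e * k) • o + (-e) • v)) = 6 := by
      rw [hval]
      rcases hu with rfl | rfl
      · linear_combination hq3 + (a - 3 * k - 5) * hke
      · linear_combination hq3 + (a - 3 * k + 5) * hke
    omega
  -- discriminant is not 6
  have hd6 : 3 * q - a ^ 2 ≠ 6 := by
    intro hd
    have hq3 : 3 * q = a ^ 2 + 6 := by omega
    have h3a : ∃ k : ℤ, a = 3 * k := by
      have hsq0 : a ^ 2 % 3 = 0 := by omega
      have h0 : a % 3 = 0 ∨ a % 3 = 1 ∨ a % 3 = 2 := by omega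
      rcases h0 with h0 | h0 | h0
      · exact ⟨a / 3, by omega⟩
      · rw [hp, h0] at hsq0; norm_num at hsq0
      · rw [hp, h0] at hsq0; norm_num at hsq0
    obtain ⟨k, hk⟩ := h3a
    apply hnoroots
    refine ⟨(1 : ℤ) • v + (-k) • o, ?_⟩
    have hval := hexp 1 (-k) v o
    rw [ho, hsym v o, ← ha, ← hq] at hval
    have h3u : 3 * (((1 : ℤ) • v + (-k) • o) ⬝ᵥ G.mulVec ((1 : ℤ) • v + (-k) • o)) = 6 := by
      rw [hval]
      linear_combination hq3 + (a - 3 * k) * hk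
    omega
  exact ⟨by omega, by omega⟩
end

section
/- Let G be a symmetric positive-definite m×m integer matrix and 𝔬 ∈ ℤᵐ a vector with 𝔬ᵀG𝔬 = 3 such that wᵀGw is even for every w ∈ ℤᵐ with 𝔬ᵀGw = 0. Suppose that for every d ∈ ℋ there exists v ∈ ℤᵐ with 3·(vᵀGv) − (𝔬ᵀGv)² = d. Then for every integer m₀ ≥ 2 there exists w ∈ ℤᵐ with 𝔬ᵀGw = 0 and wᵀGw = 2m₀. -/
open Matrix

/-- if a positive-definite integer lattice G with a distinguished
element 𝔬 (norm 3, even orthogonal complement) represents every d ∈ ℋ as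
3⟨v,v⟩ − ⟨𝔬,v⟩², then the orthogonal complement of 𝔬 contains a vector of norm
2m₀ for every integer m₀ ≥ 2. -/
theorem orthogonal_complement_represents_all_even
    (m : ℕ) (G : Matrix (Fin m) (Fin m) ℤ) (hG : G.IsSymm)
    (hGpos : ∀ v : Fin m → ℤ, v ≠ 0 → 0 < v ⬝ᵥ G.mulVec v)
    (o : Fin m → ℤ)
    (ho : o ⬝ᵥ G.mulVec o = 3)
    (heven : ∀ w : Fin m → ℤ, o ⬝ᵥ G.mulVec w = 0 → 2 ∣ w ⬝ᵥ G.mulVec w)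
    (hrep : ∀ d : ℕ, 6 < d → (d % 6 = 0 ∨ d % 6 = 2) →
      ∃ v : Fin m → ℤ, 3 * (v ⬝ᵥ G.mulVec v) - (o ⬝ᵥ G.mulVec v) ^ 2 = (d : ℤ)) :
    ∀ m₀ : ℤ, 2 ≤ m₀ →
      ∃ w : Fin m → ℤ, o ⬝ᵥ G.mulVec w = 0 ∧ w ⬝ᵥ G.mulVec w = 2 * m₀ := by
  intro m₀ hm₀
  -- write m₀ as a natural number
  obtain ⟨n, rfl⟩ := Int.eq_ofNat_of_zero_le (by omega : (0:ℤ) ≤ m₀)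
  have hn : 2 ≤ n := by exact_mod_cast hm₀
  obtain ⟨v, hv⟩ := hrep (6 * n) (by omega) (Or.inl (by omega))
  set t : ℤ := o ⬝ᵥ G.mulVec v with ht
  have hsymm : v ⬝ᵥ G.mulVec o = t := by
    rw [ht, Matrix.dotProduct_mulVec, ← Matrix.mulVec_transpose, hG.eq]
    exact dotProduct_comm _ _
  have h3 : (3:ℤ) ∣ t := by
    have : (3:ℤ) ∣ t ^ 2 := ⟨v ⬝ᵥ G.mulVec v - 2 * n, by push_cast at hv ⊢; linarith⟩
    exact (Int.Prime.dvd_pow' (by norm_num) this)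
  obtain ⟨k, hk⟩ := h3
  refine ⟨v - k • o, ?_, ?_⟩
  · rw [Matrix.mulVec_sub, dotProduct_sub, Matrix.mulVec_smul, dotProduct_smul,
      smul_eq_mul, ho, ← ht, hk]
    ring
  · rw [Matrix.mulVec_sub, Matrix.mulVec_smul, dotProduct_sub, sub_dotProduct,
      sub_dotProduct, smul_dotProduct, dotProduct_smul, dotProduct_smul,
      smul_dotProduct, smul_eq_mul, smul_eq_mul, smul_eq_mul, smul_eq_mul, ho, hsymm, ← ht]
    have hv' : 3 * (v ⬝ᵥ G.mulVec v) - t ^ 2 = 6 * (n:ℤ) := by rw [ht]; exact_mod_cast hv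
    nlinarith [hv', hk]
end

section
/- Let n be a positive natural number not of the form 4^k(8m+7) for any naturals k, m (so that n is a sum of three integer squares). Then n admits a nontrivial representation n = a² + b² + c² with a, b, c ∈ ℤ — i.e. a representation in which at least two of a, b, c are nonzero — if and only if n is not a power of 4. -/
/-!
Powers of `4` have only trivial representations: a sum of three squares divisible by `4` has all
three terms even, so one descends to `1 = 1² + 0² + 0²`. Conversely, after removing factors of `4`
we may assume `4 ∤ n`, `n ≢ 7 (mod 8)` and `n > 1`. Following Dirichlet, a prime `p` in a suitable
residue class mod `4n` yields integers `D, N, x, y` with `nD - N = 1` and `yN - x² = D`, so that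
`M = [[n, 1, 0], [1, y, -x], [0, -x, N]]` is positive definite of determinant `1`. Hermite's bounds
show that such a form has minimum `1`, and splitting off that vector shows `M = VᵀV` for an
integral `V`. The first column of `V` represents `n`, and its inner product with the second column
is `M₀₁ = 1`, which rules out a trivial representation unless `n = 1`.
-/

open Matrix
open scoped NumberTheorySymbols

def binaryQF (a b c x y : ℤ) : ℤ := a * x ^ 2 + 2 * b * x * y + c * y ^ 2

lemma binaryQF_mul_binaryQF_sub_sq (a b c x y u w : ℤ) :
    binaryQF a b c x y * binaryQF a b c u w - (a * x * u + b * (x * w + y * u) + c * y * w) ^ 2 =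
      (a * c - b ^ 2) * (x * w - y * u) ^ 2 := by
  unfold binaryQF; ring

lemma Int.exists_sq_two_mul_add_le {μ : ℤ} (hμ : 0 < μ) (t : ℤ) :
    ∃ k, (2 * (μ * k + t)) ^ 2 ≤ μ ^ 2 := by
  refine ⟨-((2 * t + μ) / (2 * μ)), ?_⟩
  have h₀ := Int.emod_nonneg (2 * t + μ) (by omega : 2 * μ ≠ 0)
  have h₁ := Int.emod_lt_of_pos (2 * t + μ) (by omega : 0 < 2 * μ)
  have h₂ := Int.emod_def (2 * t + μ) (2 * μ)
  nlinarith

/-- Hermite's bound for binary forms; the value is the minimum over primitive vectors. -/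
lemma exists_three_mul_binaryQF_sq_le {a b c : ℤ}
    (hpos : ∀ x y, (x ≠ 0 ∨ y ≠ 0) → 0 < binaryQF a b c x y) :
    ∃ x y, (x ≠ 0 ∨ y ≠ 0) ∧ 3 * binaryQF a b c x y ^ 2 ≤ 4 * (a * c - b ^ 2) := by
  have hne {x y : ℤ} (h : IsCoprime x y) : x ≠ 0 ∨ y ≠ 0 := by
    by_contra! h0
    rw [h0.1, h0.2] at h
    exact not_isCoprime_zero_zero h
  obtain ⟨ν, ⟨x, y, hxy, rfl⟩, hmin⟩ :=
    Int.exists_least_of_bdd (P := fun z => ∃ x y, IsCoprime x y ∧ binaryQF a b c x y = z)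
      ⟨0, fun _ ⟨x, y, hxy, hz⟩ => hz ▸ (hpos x y (hne hxy)).le⟩
      ⟨_, 1, 0, isCoprime_one_left, rfl⟩
  refine ⟨x, y, hne hxy, ?_⟩
  have hν := hpos x y (hne hxy)
  obtain ⟨s, t, hst⟩ := hxy
  -- complete `(x, y)` to a basis by `(u, w)` and size-reduce `(u, w)` against `(x, y)`
  obtain ⟨k, hk⟩ := Int.exists_sq_two_mul_add_le hν
    (a * x * -t + b * (x * s + y * -t) + c * y * s)
  have hdet : x * (k * y + s) - y * (k * x - t) = 1 := by linear_combination hst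
  have hle := hmin _ ⟨k * x - t, k * y + s, ⟨-y, x, by linear_combination hdet⟩, rfl⟩
  have key := binaryQF_mul_binaryQF_sub_sq a b c x y (k * x - t) (k * y + s)
  have hB : a * x * (k * x - t) + b * (x * (k * y + s) + y * (k * x - t)) + c * y * (k * y + s)
      = binaryQF a b c x y * k + (a * x * -t + b * (x * s + y * -t) + c * y * s) := by
    unfold binaryQF; ring
  rw [hdet, hB] at key
  nlinarith

lemma eq_sq_add_sq_of_binaryQF_eq_one {a b c x y : ℤ} (h : binaryQF a b c x y = 1)
    (hdet : a * c - b ^ 2 = 1) :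
    a = (a * x + b * y) ^ 2 + y ^ 2 ∧ b = (a * x + b * y) * (b * x + c * y) + y * -x ∧
      c = (b * x + c * y) ^ 2 + (-x) ^ 2 := by
  unfold binaryQF at h
  refine ⟨?_, ?_, ?_⟩
  · linear_combination (-a) * h + y ^ 2 * hdet
  · linear_combination (-b) * h - x * y * hdet
  · linear_combination (-c) * h + x ^ 2 * hdet

lemma exists_eq_sq_add_sq_of_binaryQF_pos {a b c : ℤ}
    (hpos : ∀ x y, (x ≠ 0 ∨ y ≠ 0) → 0 < binaryQF a b c x y) (hdet : a * c - b ^ 2 = 1) :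
    ∃ p q r s : ℤ, a = p ^ 2 + q ^ 2 ∧ b = p * r + q * s ∧ c = r ^ 2 + s ^ 2 := by
  obtain ⟨x, y, hxy, hν⟩ := exists_three_mul_binaryQF_sq_le hpos
  have h1 : binaryQF a b c x y = 1 := by have := hpos x y hxy; nlinarith
  exact ⟨_, _, _, _, eq_sq_add_sq_of_binaryQF_eq_one h1 hdet⟩

namespace Matrix

section TrivialStar

variable {ι R : Type*} [Ring R] [PartialOrder R] [StarRing R] [TrivialStar R] {M : Matrix ι ι R}

lemma PosDef.isSymm (hM : M.PosDef) : M.IsSymm := by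
  simpa [IsSymm, IsHermitian, conjTranspose_eq_transpose_of_trivial] using hM.1

lemma PosDef.dotProduct_mulVec_pos' [Fintype ι] (hM : M.PosDef) {v : ι → R} (hv : v ≠ 0) :
    0 < v ⬝ᵥ M *ᵥ v := by
  simpa using hM.dotProduct_mulVec_pos hv

end TrivialStar

section Int

variable {ι : Type*} [Fintype ι] {M : Matrix ι ι ℤ}

lemma PosDef.exists_forall_le [Nonempty ι] (hM : M.PosDef) :
    ∃ v ≠ 0, ∀ w ≠ 0, v ⬝ᵥ M *ᵥ v ≤ w ⬝ᵥ M *ᵥ w := by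
  have hone : (fun _ => 1 : ι → ℤ) ≠ 0 := fun h =>
    one_ne_zero (congrFun h (Classical.arbitrary ι))
  obtain ⟨_, ⟨v, hv, rfl⟩, hmin⟩ := Int.exists_least_of_bdd
    (P := fun z => ∃ v ≠ 0, v ⬝ᵥ M *ᵥ v = z)
    ⟨0, fun _ ⟨v, hv, hz⟩ => hz ▸ (hM.dotProduct_mulVec_pos' hv).le⟩ ⟨_, _, hone, rfl⟩
  exact ⟨v, hv, fun w hw => hmin _ ⟨w, hw, rfl⟩⟩

lemma PosDef.isUnit_of_forall_dvd (hM : M.PosDef) {v : ι → ℤ} (hv : v ≠ 0)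
    (hmin : ∀ w ≠ 0, v ⬝ᵥ M *ᵥ v ≤ w ⬝ᵥ M *ᵥ w) {g : ℤ} (hg : ∀ i, g ∣ v i) : IsUnit g := by
  choose w hw using hg
  have hvw : v = g • w := funext hw
  have hw0 : w ≠ 0 := by rintro rfl; simp [hvw] at hv
  have hg0 : g ≠ 0 := by rintro rfl; simp [hvw] at hv
  have hQ : v ⬝ᵥ M *ᵥ v = g ^ 2 * (w ⬝ᵥ M *ᵥ w) := by
    rw [hvw, mulVec_smul, smul_dotProduct, dotProduct_smul, smul_eq_mul, smul_eq_mul]; ring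
  have hle := hmin w hw0
  have hpos := hM.dotProduct_mulVec_pos' hw0
  have hg1 : g ^ 2 ≤ 1 := by nlinarith
  have : -1 ≤ g ∧ g ≤ 1 := by constructor <;> nlinarith
  rw [Int.isUnit_iff]
  omega

end Int

lemma exists_det_eq_one_of_forall_dvd_isUnit (v : Fin 3 → ℤ)
    (hv : ∀ g : ℤ, (∀ i, g ∣ v i) → IsUnit g) :
    ∃ U : Matrix (Fin 3) (Fin 3) ℤ, U.det = 1 ∧ U *ᵥ Pi.single 0 1 = v := by
  by_cases hd : Int.gcd (v 0) (v 1) = 0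
  · obtain ⟨h0, h1⟩ := Int.gcd_eq_zero_iff.mp hd
    have h2 := Int.isUnit_mul_self (hv (v 2) (by intro i; fin_cases i <;> simp [h0, h1]))
    refine ⟨!![0, 1, 0; 0, 0, v 2; v 2, 0, 0], by simp [det_fin_three, h2], ?_⟩
    ext i; fin_cases i <;> simp [h0, h1]
  obtain ⟨d, hd0, ⟨a, ha⟩, ⟨b, hb⟩, s, t, hst⟩ : ∃ d : ℤ, d ≠ 0 ∧ d ∣ v 0 ∧ d ∣ v 1 ∧
      ∃ s t, v 0 * s + v 1 * t = d :=
    ⟨_, by exact_mod_cast hd, Int.gcd_dvd_left _ _, Int.gcd_dvd_right _ _, _, _,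
      (Int.gcd_eq_gcd_ab _ _).symm⟩
  obtain ⟨u, w, huw⟩ : IsCoprime d (v 2) := by
    rw [Int.isCoprime_iff_gcd_eq_one]
    have := hv (Int.gcd d (v 2)) fun i => by
      fin_cases i
      · exact (Int.gcd_dvd_left _ _).trans ⟨a, ha⟩
      · exact (Int.gcd_dvd_left _ _).trans ⟨b, hb⟩
      · exact Int.gcd_dvd_right _ _
    simpa [Int.isUnit_iff_natAbs_eq] using this
  have hab : a * s + b * t = 1 :=
    mul_left_cancel₀ hd0 (by linear_combination hst - s * ha - t * hb)
  refine ⟨!![v 0, -t, -(w * a); v 1, s, -(w * b); v 2, 0, u], ?_, ?_⟩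
  · rw [det_fin_three]
    simp
    linear_combination u * hst + v 2 * w * hab + huw
  · ext i; fin_cases i <;> simp

lemma PosDef.exists_det_eq_one_forall_le {M : Matrix (Fin 3) (Fin 3) ℤ} (hM : M.PosDef) :
    ∃ U : Matrix (Fin 3) (Fin 3) ℤ, U.det = 1 ∧
      ∀ w ≠ 0, (Uᵀ * M * U) 0 0 ≤ w ⬝ᵥ (Uᵀ * M * U) *ᵥ w := by
  obtain ⟨v, hv, hmin⟩ := hM.exists_forall_le
  obtain ⟨U, hU, hUv⟩ :=
    exists_det_eq_one_of_forall_dvd_isUnit v fun _ => hM.isUnit_of_forall_dvd hv hmin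
  have hQ (w : Fin 3 → ℤ) : w ⬝ᵥ (Uᵀ * M * U) *ᵥ w = (U *ᵥ w) ⬝ᵥ M *ᵥ (U *ᵥ w) := by
    rw [← mulVec_mulVec, ← mulVec_mulVec, dotProduct_mulVec, vecMul_transpose]
  have h00 : (Uᵀ * M * U) 0 0 = v ⬝ᵥ M *ᵥ v := by
    rw [← hUv, ← hQ]; simp
  refine ⟨U, hU, fun w hw => h00 ▸ hQ w ▸ hmin _ fun h => hw ?_⟩
  exact mulVec_injective_of_isUnit ((isUnit_iff_isUnit_det U).mpr (by simp [hU]))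
    (h.trans (mulVec_zero U).symm)

lemma IsSymm.apply_zero_zero_mul_dotProduct_mulVec {M : Matrix (Fin 3) (Fin 3) ℤ}
    (hM : M.IsSymm) (x y z : ℤ) :
    M 0 0 * (![x, y, z] ⬝ᵥ M *ᵥ ![x, y, z]) = (M 0 0 * x + M 0 1 * y + M 0 2 * z) ^ 2 +
      binaryQF (M 0 0 * M 1 1 - M 0 1 ^ 2) (M 0 0 * M 1 2 - M 0 1 * M 0 2)
        (M 0 0 * M 2 2 - M 0 2 ^ 2) y z := by
  simp [binaryQF, dotProduct, mulVec, Fin.sum_univ_three, hM.apply 0 1, hM.apply 0 2,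
    hM.apply 1 2]
  ring

lemma IsSymm.apply_zero_zero_mul_det {M : Matrix (Fin 3) (Fin 3) ℤ} (hM : M.IsSymm) :
    (M 0 0 * M 1 1 - M 0 1 ^ 2) * (M 0 0 * M 2 2 - M 0 2 ^ 2) -
      (M 0 0 * M 1 2 - M 0 1 * M 0 2) ^ 2 = M 0 0 * M.det := by
  rw [det_fin_three, hM.apply 0 1, hM.apply 0 2, hM.apply 1 2]
  ring

lemma vec3_ne_zero {x y z : ℤ} (h : y ≠ 0 ∨ z ≠ 0) : ![x, y, z] ≠ 0 := fun h0 => by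
  have h1 := congrFun h0 1
  have h2 := congrFun h0 2
  simp_all

/-- The binary form in `IsSymm.apply_zero_zero_mul_dotProduct_mulVec` has determinant `μ = M 0 0`
and, by minimality of `μ`, only values `ν ≥ 3μ²/4`; Hermite's bound `3ν² ≤ 4μ` then forces
`μ = 1`. -/
lemma PosDef.apply_zero_zero_eq_one {M : Matrix (Fin 3) (Fin 3) ℤ} (hM : M.PosDef)
    (hdet : M.det = 1) (hmin : ∀ w ≠ 0, M 0 0 ≤ w ⬝ᵥ M *ᵥ w) : M 0 0 = 1 := by
  have hμ : 0 < M 0 0 := hM.diag_pos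
  have hlow : ∀ y z, (y ≠ 0 ∨ z ≠ 0) → 3 * M 0 0 ^ 2 ≤ 4 * binaryQF (M 0 0 * M 1 1 - M 0 1 ^ 2)
      (M 0 0 * M 1 2 - M 0 1 * M 0 2) (M 0 0 * M 2 2 - M 0 2 ^ 2) y z := by
    intro y z hyz
    obtain ⟨x, hx⟩ := Int.exists_sq_two_mul_add_le hμ (M 0 1 * y + M 0 2 * z)
    have hle := hmin _ (vec3_ne_zero (x := x) hyz)
    have := hM.isSymm.apply_zero_zero_mul_dotProduct_mulVec x y z
    nlinarith
  obtain ⟨y, z, hyz, hν⟩ := exists_three_mul_binaryQF_sq_le fun y z h => by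
    nlinarith [hlow y z h]
  rw [hM.isSymm.apply_zero_zero_mul_det, hdet, mul_one] at hν
  have hl := hlow y z hyz
  generalize binaryQF _ _ _ y z = ν at hν hl
  have hsq : 9 * M 0 0 ^ 4 ≤ 16 * ν ^ 2 := by nlinarith
  have hcube : M 0 0 ^ 3 ≤ 2 := by nlinarith
  by_contra h
  nlinarith [pow_le_pow_left₀ (by norm_num : (0 : ℤ) ≤ 2) (by omega : 2 ≤ M 0 0) 3]

lemma PosDef.exists_eq_transpose_mul_self_of_apply_zero_zero {M : Matrix (Fin 3) (Fin 3) ℤ}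
    (hM : M.PosDef) (hdet : M.det = 1) (h00 : M 0 0 = 1) : ∃ W, M = Wᵀ * W := by
  have hpos : ∀ y z, (y ≠ 0 ∨ z ≠ 0) → 0 < binaryQF (M 1 1 - M 0 1 ^ 2)
      (M 1 2 - M 0 1 * M 0 2) (M 2 2 - M 0 2 ^ 2) y z := by
    intro y z hyz
    have := hM.dotProduct_mulVec_pos' (vec3_ne_zero (x := -(M 0 1 * y + M 0 2 * z)) hyz)
    have := hM.isSymm.apply_zero_zero_mul_dotProduct_mulVec (-(M 0 1 * y + M 0 2 * z)) y z
    simp only [h00, one_mul] at this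
    nlinarith
  have hdet' := hM.isSymm.apply_zero_zero_mul_det
  simp only [h00, hdet, one_mul] at hdet'
  obtain ⟨p, q, r, s, hp, hq, hr⟩ := exists_eq_sq_add_sq_of_binaryQF_pos hpos hdet'
  refine ⟨!![1, M 0 1, M 0 2; 0, p, r; 0, q, s], ?_⟩
  ext i j
  fin_cases i <;> fin_cases j <;>
    simp [mul_apply, Fin.sum_univ_three, h00, hM.isSymm.apply 0 1, hM.isSymm.apply 0 2,
      hM.isSymm.apply 1 2] <;> linarith

theorem PosDef.exists_eq_transpose_mul_self {M : Matrix (Fin 3) (Fin 3) ℤ} (hM : M.PosDef)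
    (hdet : M.det = 1) : ∃ V, M = Vᵀ * V := by
  obtain ⟨U, hU, hmin⟩ := hM.exists_det_eq_one_forall_le
  have hUunit : IsUnit U.det := by simp [hU]
  have hM' : (Uᵀ * M * U).PosDef := by
    simpa [conjTranspose_eq_transpose_of_trivial] using hM.conjTranspose_mul_mul_same
      (mulVec_injective_of_isUnit ((isUnit_iff_isUnit_det U).mpr hUunit))
  have hdet' : (Uᵀ * M * U).det = 1 := by simp [hU, hdet]
  obtain ⟨W, hW⟩ := hM'.exists_eq_transpose_mul_self_of_apply_zero_zero hdet'
    (hM'.apply_zero_zero_eq_one hdet' hmin)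
  refine ⟨W * U⁻¹, ?_⟩
  calc M = (U * U⁻¹)ᵀ * M * (U * U⁻¹) := by simp [mul_nonsing_inv U hUunit]
    _ = (U⁻¹)ᵀ * (Uᵀ * M * U) * U⁻¹ := by simp only [transpose_mul, Matrix.mul_assoc]
    _ = (W * U⁻¹)ᵀ * (W * U⁻¹) := by rw [hW]; simp only [transpose_mul, Matrix.mul_assoc]

end Matrix

lemma exists_posDef_of_dvd_sq_add {n D N x : ℤ} (hD : 0 < D) (hN : 0 < N)
    (hnD : n * D = N + 1) (hdvd : N ∣ x ^ 2 + D) :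
    ∃ M : Matrix (Fin 3) (Fin 3) ℤ, M.PosDef ∧ M.det = 1 ∧ M 0 0 = n ∧ M 0 1 = 1 := by
  obtain ⟨y, hy⟩ := hdvd
  refine ⟨!![n, 1, 0; 1, y, -x; 0, -x, N], ?_, ?_, rfl, rfl⟩
  · refine PosDef.of_dotProduct_mulVec_pos ?_ fun v hv => ?_
    · ext i j; fin_cases i <;> fin_cases j <;> rfl
    have key : D * N * (star v ⬝ᵥ !![n, 1, 0; 1, y, -x; 0, -x, N] *ᵥ v) =
        N * v 0 ^ 2 + (D * v 1 + N * v 0) ^ 2 + D * (N * v 2 - x * v 1) ^ 2 := by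
      simp [dotProduct, mulVec, Fin.sum_univ_three]
      linear_combination N * v 0 ^ 2 * hnD - D * v 1 ^ 2 * hy
    by_contra! hle
    have hDN := mul_pos hD hN
    obtain ⟨h0, h1, h2⟩ : N * v 0 ^ 2 = 0 ∧ D * v 1 + N * v 0 = 0 ∧
        D * (N * v 2 - x * v 1) ^ 2 = 0 := by
      refine ⟨?_, ?_, ?_⟩ <;> nlinarith [sq_nonneg (v 0), sq_nonneg (D * v 1 + N * v 0),
        sq_nonneg (N * v 2 - x * v 1)]
    have e0 : v 0 = 0 := by simpa [hN.ne'] using h0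
    have e1 : v 1 = 0 := by simpa [e0, hD.ne'] using h1
    have e2 : v 2 = 0 := by simpa [e1, hD.ne', hN.ne'] using h2
    exact hv (funext fun i => by fin_cases i <;> assumption)
  · simp [det_fin_three]
    linear_combination hnD - n * hy

lemma jacobiSym_neg_eq_of_dvd_mul_sub_one {p : ℕ} {n D : ℤ} (h : (p : ℤ) ∣ n * D - 1) :
    J(-D | p) = J(-n | p) := by
  obtain ⟨k, hk⟩ := h
  have hcop : n.gcd p = 1 :=
    Int.isCoprime_iff_gcd_eq_one.mp ⟨D, -k, by linear_combination hk⟩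
  calc J(-D | p) = J(-D | p) * J(n | p) ^ 2 := by rw [jacobiSym.sq_one hcop, mul_one]
    _ = J(-n | p) := by
      rw [← jacobiSym.pow_left, ← jacobiSym.mul_left]
      exact jacobiSym.mod_left' (Int.modEq_iff_dvd.mpr ⟨n * k, by linear_combination n * hk⟩)

lemma jacobiSym_neg_eq_of_modEq {n p a : ℕ} (hp : Odd p) (ha : Odd a) (h : p ≡ a [MOD 4 * n]) :
    J(-n | p) = J(-n | a) := by
  rw [jacobiSym.mod_right _ hp, jacobiSym.mod_right _ ha, Int.natAbs_neg, Int.natAbs_natCast, h]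

lemma jacobiSym_neg_eq_one_of_add_one_eq_two_mul {n b : ℕ} (hn : n % 4 = 1 ∨ n % 4 = 2)
    (hb : b + 1 = 2 * n) : J(-n | b) = 1 := by
  have hodd : Odd b := Nat.odd_iff.mpr (by omega)
  have hb' : (b : ℤ) + 1 = 2 * n := by exact_mod_cast hb
  calc J(-n | b) = J(4 | b) * J(-n | b) := by rw [jacobiSym.at_four hodd, one_mul]
    _ = J(-2 | b) := by
      rw [← jacobiSym.mul_left]
      exact jacobiSym.mod_left' (Int.modEq_iff_dvd.mpr ⟨2, by linear_combination (-2) * hb'⟩)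
    _ = 1 := by
      rw [jacobiSym.at_neg_two hodd, ZMod.χ₈'_nat_eq_if_mod_eight]
      have : b % 8 = 1 ∨ b % 8 = 3 := by omega
      simp [this, show b % 2 = 1 by omega]

lemma jacobiSym_neg_eq_one_of_eq_two_mul_add_one {n a : ℕ} (hn : n = 2 * a + 1)
    (ha : a % 4 = 1) : J(-n | a) = 1 := by
  have hodd : Odd a := Nat.odd_iff.mpr (by omega)
  rw [jacobiSym.mod_left' (b := a) (a₂ := -1)
      (Int.modEq_iff_dvd.mpr ⟨2, by rw [hn]; push_cast; ring⟩),
    jacobiSym.at_neg_one hodd, ZMod.χ₄_nat_eq_if_mod_four]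
  simp [ha, show a % 2 = 1 by omega]

lemma exists_sq_add_dvd_of_jacobiSym_eq_one {p : ℕ} [Fact p.Prime] {D : ℤ}
    (h : J(-D | p) = 1) : ∃ x : ℤ, (p : ℤ) ∣ x ^ 2 + D := by
  obtain ⟨r, hr⟩ := ZMod.isSquare_of_jacobiSym_eq_one h
  refine ⟨r.val, (ZMod.intCast_zmod_eq_zero_iff_dvd _ p).mp ?_⟩
  push_cast
  rw [ZMod.natCast_zmod_val, sq, ← hr]
  push_cast
  ring

lemma exists_sq_add_dvd_two_mul {p D x : ℤ} (hp : Odd p) (h : p ∣ x ^ 2 + D) :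
    ∃ y, 2 * p ∣ y ^ 2 + D := by
  obtain ⟨m, rfl⟩ := hp
  obtain ⟨e, he⟩ := Int.even_mul_succ_self D
  -- `y ≡ x (mod p)` and `y ≡ D (mod 2)`
  refine ⟨x + (2 * m + 1) * (x + D), IsCoprime.mul_dvd ⟨-m, 1, by ring⟩ ?_ ?_⟩
  · exact ⟨2 * (x + m * (x + D)) ^ 2 + 2 * (x + m * (x + D)) * D + e, by linear_combination he⟩
  · obtain ⟨f, hf⟩ := h
    exact ⟨f + (x + D) * (2 * x + (2 * m + 1) * (x + D)), by linear_combination hf⟩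

lemma exists_posDef_of_mod_four {n : ℕ} (hn : n % 4 = 1 ∨ n % 4 = 2) :
    ∃ M : Matrix (Fin 3) (Fin 3) ℤ, M.PosDef ∧ M.det = 1 ∧ M 0 0 = n ∧ M 0 1 = 1 := by
  obtain ⟨b, hb⟩ : ∃ b, b + 1 = 2 * n := ⟨2 * n - 1, by omega⟩
  have hb' : (b : ℤ) + 1 = 2 * n := by exact_mod_cast hb
  obtain ⟨p, -, hp, hpb⟩ := Nat.forall_exists_prime_gt_and_modEq 0 (by omega : 4 * n ≠ 0)
    (Nat.isCoprime_iff_coprime.mp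
      ⟨b, 1 - n, by push_cast; linear_combination (b + 2 * n - 1 : ℤ) * hb'⟩)
  have := Fact.mk hp
  obtain ⟨k, hk⟩ : ∃ k, p = 4 * n * k + b := ⟨p / (4 * n), by
    rw [← Nat.mod_eq_of_lt (by omega : b < 4 * n), ← hpb, Nat.div_add_mod]⟩
  have hpodd : Odd p :=
    hk ▸ (even_iff_two_dvd.mpr ⟨2 * n * k, by ring⟩).add_odd (Nat.odd_iff.mpr (by omega))
  have hnD : (n : ℤ) * (4 * k + 2) = p + 1 := by push_cast [hk]; linear_combination -hb'
  have hJ : J(-(4 * k + 2 : ℤ) | p) = 1 := by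
    rw [jacobiSym_neg_eq_of_dvd_mul_sub_one (n := n) ⟨1, by linear_combination hnD⟩,
      jacobiSym_neg_eq_of_modEq hpodd (Nat.odd_iff.mpr (by omega)) hpb,
      jacobiSym_neg_eq_one_of_add_one_eq_two_mul hn hb]
  obtain ⟨x, hx⟩ := exists_sq_add_dvd_of_jacobiSym_eq_one hJ
  exact exists_posDef_of_dvd_sq_add (by positivity) (by exact_mod_cast hp.pos) hnD hx

lemma exists_posDef_of_mod_eight {n : ℕ} (hn : n % 8 = 3) :
    ∃ M : Matrix (Fin 3) (Fin 3) ℤ, M.PosDef ∧ M.det = 1 ∧ M 0 0 = n ∧ M 0 1 = 1 := by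
  obtain ⟨j, rfl⟩ : ∃ j, n = 8 * j + 3 := ⟨n / 8, by omega⟩
  obtain ⟨p, -, hp, hpa⟩ := Nat.forall_exists_prime_gt_and_modEq 0
    (by omega : 4 * (8 * j + 3) ≠ 0) (a := 4 * j + 1)
    (Nat.isCoprime_iff_coprime.mp ⟨8 * j + 1, -j, by push_cast; ring⟩)
  have := Fact.mk hp
  obtain ⟨k, hk⟩ : ∃ k, p = 4 * (8 * j + 3) * k + (4 * j + 1) := ⟨p / (4 * (8 * j + 3)), by
    rw [← Nat.mod_eq_of_lt (by omega : 4 * j + 1 < 4 * (8 * j + 3)), ← hpa, Nat.div_add_mod]⟩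
  have hpodd : Odd p :=
    hk ▸ (even_iff_two_dvd.mpr ⟨2 * (8 * j + 3) * k, by ring⟩).add_odd (Nat.odd_iff.mpr (by omega))
  have hnD : ((8 * j + 3 : ℕ) : ℤ) * (8 * k + 1) = 2 * p + 1 := by push_cast [hk]; ring
  have hJ : J(-(8 * k + 1 : ℤ) | p) = 1 := by
    rw [jacobiSym_neg_eq_of_dvd_mul_sub_one (n := (8 * j + 3 : ℕ))
        ⟨2, by linear_combination hnD⟩,
      jacobiSym_neg_eq_of_modEq hpodd (Nat.odd_iff.mpr (by omega)) hpa,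
      jacobiSym_neg_eq_one_of_eq_two_mul_add_one (by ring) (by omega)]
  obtain ⟨x, hx⟩ := exists_sq_add_dvd_of_jacobiSym_eq_one hJ
  obtain ⟨y, hy⟩ := exists_sq_add_dvd_two_mul (by exact_mod_cast hpodd.natCast) hx
  exact exists_posDef_of_dvd_sq_add (by positivity) (by have := hp.pos; positivity) hnD hy

lemma exists_sq_add_sq_add_sq_of_not_four_dvd {n : ℕ} (h4 : ¬ 4 ∣ n) (h7 : n % 8 ≠ 7) :
    ∃ a b c u v w : ℤ, a ^ 2 + b ^ 2 + c ^ 2 = n ∧ a * u + b * v + c * w = 1 := by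
  obtain ⟨M, hM, hdet, h00, h01⟩ : ∃ M : Matrix (Fin 3) (Fin 3) ℤ,
      M.PosDef ∧ M.det = 1 ∧ M 0 0 = n ∧ M 0 1 = 1 := by
    rcases (by omega : (n % 4 = 1 ∨ n % 4 = 2) ∨ n % 8 = 3) with h | h
    · exact exists_posDef_of_mod_four h
    · exact exists_posDef_of_mod_eight h
  obtain ⟨V, rfl⟩ := hM.exists_eq_transpose_mul_self hdet
  refine ⟨V 0 0, V 1 0, V 2 0, V 0 1, V 1 1, V 2 1, ?_, ?_⟩
  · rw [← h00]; simp [mul_apply, Fin.sum_univ_three, sq]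
  · rw [← h01]; simp [mul_apply, Fin.sum_univ_three]

lemma sq_add_sq_add_sq_eq_one_of_mul_eq_zero {a b c u v w : ℤ} (hab : a * b = 0)
    (hbc : b * c = 0) (hca : c * a = 0) (h : a * u + b * v + c * w = 1) :
    a ^ 2 + b ^ 2 + c ^ 2 = 1 := by
  have hsq {t s : ℤ} (h : t * s = 1) : t ^ 2 = 1 := by
    rw [sq]; exact Int.isUnit_mul_self (IsUnit.of_mul_eq_one s h)
  rcases eq_or_ne a 0 with rfl | ha
  · rcases eq_or_ne b 0 with rfl | hb
    · simpa using hsq (by simpa using h)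
    · obtain rfl : c = 0 := (mul_eq_zero.mp hbc).resolve_left hb
      simpa using hsq (by simpa using h)
  · obtain rfl : b = 0 := (mul_eq_zero.mp hab).resolve_left ha
    obtain rfl : c = 0 := (mul_eq_zero.mp hca).resolve_right ha
    simpa using hsq (by simpa using h)

lemma two_dvd_of_four_dvd_sq_add_sq_add_sq {a b c : ℤ} (h : 4 ∣ a ^ 2 + b ^ 2 + c ^ 2) :
    2 ∣ a ∧ 2 ∣ b ∧ 2 ∣ c := by
  have hsq (x : ℤ) : x % 2 = 0 ∧ x ^ 2 % 4 = 0 ∨ x % 2 = 1 ∧ x ^ 2 % 4 = 1 := by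
    rcases Int.even_or_odd x with ⟨k, rfl⟩ | hx
    · refine .inl ⟨by omega, ?_⟩
      rw [show (k + k) ^ 2 = 4 * k ^ 2 by ring]; simp
    · exact .inr ⟨Int.odd_iff.mp hx, Int.sq_mod_four_eq_one_of_odd hx⟩
  have := hsq a; have := hsq b; have := hsq c
  omega

lemma mul_eq_zero_of_sq_add_sq_add_sq_eq_four_pow (k : ℕ) {a b c : ℤ}
    (h : a ^ 2 + b ^ 2 + c ^ 2 = 4 ^ k) : a * b = 0 ∧ b * c = 0 ∧ c * a = 0 := by
  induction k generalizing a b c with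
  | zero =>
    have hprod {x y : ℤ} (hxy : x ^ 2 + y ^ 2 ≤ 1) : x * y = 0 := by
      have : 2 * (x * y) ≤ 1 := by nlinarith [sq_nonneg (x - y)]
      have : -1 ≤ 2 * (x * y) := by nlinarith [sq_nonneg (x + y)]
      omega
    refine ⟨hprod ?_, hprod ?_, hprod ?_⟩ <;> nlinarith [sq_nonneg a, sq_nonneg b, sq_nonneg c]
  | succ k ih =>
    obtain ⟨⟨a, rfl⟩, ⟨b, rfl⟩, ⟨c, rfl⟩⟩ :=
      two_dvd_of_four_dvd_sq_add_sq_add_sq (h ▸ dvd_pow_self 4 k.succ_ne_zero)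
    obtain ⟨hab, hbc, hca⟩ := ih (a := a) (b := b) (c := c)
      (mul_left_cancel₀ four_ne_zero (by rw [← pow_succ']; linear_combination h))
    exact ⟨by linear_combination 4 * hab, by linear_combination 4 * hbc,
      by linear_combination 4 * hca⟩

/-- a positive natural number n, not of the form 4^k(8m+7)
(hence a sum of three integer squares), admits a nontrivial representation
n = a² + b² + c² (one with at least two nonzero coordinates) if and only if
n is not a power of 4. -/
theorem nontrivial_three_square_representation
    (n : ℕ) (hn : 0 < n) (hform : ¬ ∃ k m : ℕ, n = 4 ^ k * (8 * m + 7)) :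
    (∃ a b c : ℤ, a ^ 2 + b ^ 2 + c ^ 2 = (n : ℤ) ∧
        ¬(a * b = 0 ∧ b * c = 0 ∧ c * a = 0)) ↔
      ¬ ∃ k : ℕ, n = 4 ^ k := by
  constructor
  · rintro ⟨a, b, c, hsum, hnt⟩ ⟨k, rfl⟩
    exact hnt (mul_eq_zero_of_sq_add_sq_add_sq_eq_four_pow k (by exact_mod_cast hsum))
  · intro hpow
    obtain ⟨k, m, hm4, rfl⟩ := Nat.exists_eq_pow_mul_and_not_dvd hn.ne' 4 (by norm_num)
    have hm7 : m % 8 ≠ 7 := fun h => hform ⟨k, m / 8, by rw [← h, Nat.div_add_mod]⟩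
    have hm1 : m ≠ 1 := fun h => hpow ⟨k, by rw [h, mul_one]⟩
    obtain ⟨a, b, c, u, v, w, hsum, hdot⟩ := exists_sq_add_sq_add_sq_of_not_four_dvd hm4 hm7
    have hnt : ¬(a * b = 0 ∧ b * c = 0 ∧ c * a = 0) := fun ⟨hab, hbc, hca⟩ => hm1 <| by
      exact_mod_cast hsum.symm.trans (sq_add_sq_add_sq_eq_one_of_mul_eq_zero hab hbc hca hdot)
    refine ⟨2 ^ k * a, 2 ^ k * b, 2 ^ k * c, ?_, ?_⟩
    · rw [Nat.cast_mul, ← hsum, Nat.cast_pow, show ((4 : ℕ) : ℤ) = 2 ^ 2 by norm_num,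
        ← pow_mul, mul_comm 2 k, pow_mul]
      ring
    · simpa [mul_mul_mul_comm, mul_eq_zero] using hnt
end

section
/- Let n be a nonzero natural number such that x² + y² = 5n has a solution in integers. Then there exist integers x, y with x² + y² = 5n, x² ≡ 1 (mod 5), and y² ≡ 4 (mod 5) (equivalently x² ≡ −y² ≡ 1 (mod 5)). -/
lemma dvd5_iff (z : ℤ) : (5:ℤ) ∣ z ↔ (z : ZMod 5) = 0 := by
  rw [ZMod.intCast_zmod_eq_zero_iff_dvd]; norm_num

lemma zkey5 : ∀ u v : ZMod 5, ¬(u = 0 ∧ v = 0) →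
    ¬(3*u - 4*v = 0 ∧ 4*u + 3*v = 0) ∨ ¬(3*u + 4*v = 0 ∧ 4*u - 3*v = 0) := by decide

lemma zkey5' : ∀ u v : ZMod 5, u^2 + v^2 = 0 → ¬(u = 0 ∧ v = 0) →
    (u^2 = 1 ∧ v^2 = 4) ∨ (u^2 = 4 ∧ v^2 = 1) := by decide

lemma descent : ∀ k : ℕ, k ≠ 0 → (∃ x y : ℤ, x ^ 2 + y ^ 2 = (k : ℤ)) →
    ∃ x y : ℤ, x ^ 2 + y ^ 2 = (k : ℤ) ∧ ¬((5:ℤ) ∣ x ∧ (5:ℤ) ∣ y) := by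
  intro k
  induction k using Nat.strong_induction_on with
  | _ k ih =>
    intro hk ⟨x, y, hxy⟩
    by_cases hd : (5:ℤ) ∣ x ∧ (5:ℤ) ∣ y
    · obtain ⟨⟨a, ha⟩, ⟨b, hb⟩⟩ := hd
      have h25 : ((25:ℕ):ℤ) ∣ (k : ℤ) := ⟨a^2 + b^2, by subst ha hb; push_cast; nlinarith⟩
      have h25' : 25 ∣ k := by exact_mod_cast h25
      obtain ⟨m, hm⟩ := h25'
      have hm0 : m ≠ 0 := by omega
      have hmlt : m < k := by omega
      have hab : a ^ 2 + b ^ 2 = (m : ℤ) := by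
        have : (25:ℤ) * (a^2 + b^2) = 25 * m := by
          subst ha hb; push_cast [hm] at hxy ⊢; nlinarith
        linarith
      obtain ⟨a', b', hab', hnd⟩ := ih m hmlt hm0 ⟨a, b, hab⟩
      rw [dvd5_iff, dvd5_iff] at hnd
      have hk25 : (k : ℤ) = 25 * m := by exact_mod_cast hm
      rcases zkey5 (a' : ZMod 5) (b' : ZMod 5) hnd with h | h
      · refine ⟨3*a' - 4*b', 4*a' + 3*b', by rw [hk25]; nlinarith, ?_⟩
        rw [dvd5_iff, dvd5_iff]
        push_cast
        exact h
      · refine ⟨3*a' + 4*b', 4*a' - 3*b', by rw [hk25]; nlinarith, ?_⟩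
        rw [dvd5_iff, dvd5_iff]
        push_cast
        exact h
    · exact ⟨x, y, hxy, hd⟩

/-- if x² + y² = 5n ≠ 0 is solvable over ℤ, then there is a
solution with x² ≡ 1 (mod 5) and y² ≡ 4 (mod 5). -/
theorem sum_two_squares_five_mul_special_solution
    (n : ℕ) (hn : n ≠ 0)
    (hsol : ∃ x y : ℤ, x ^ 2 + y ^ 2 = 5 * (n : ℤ)) :
    ∃ x y : ℤ, x ^ 2 + y ^ 2 = 5 * (n : ℤ) ∧ x ^ 2 % 5 = 1 ∧ y ^ 2 % 5 = 4 := by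
  obtain ⟨x, y, hxy, hnd⟩ := descent (5 * n) (by omega)
    (by obtain ⟨x, y, h⟩ := hsol; exact ⟨x, y, by push_cast; linarith⟩)
  have hxy' : x ^ 2 + y ^ 2 = 5 * (n : ℤ) := by push_cast at hxy; linarith
  rw [dvd5_iff, dvd5_iff] at hnd
  have hsum : (x : ZMod 5)^2 + (y : ZMod 5)^2 = 0 := by
    have : ((x^2 + y^2 : ℤ) : ZMod 5) = ((5 * (n:ℤ) : ℤ) : ZMod 5) := by rw [hxy']
    push_cast at this
    rw [show ((5:ZMod 5)) = 0 by decide, zero_mul] at this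
    exact this
  have key : ∀ z : ℤ, ∀ c : ℤ, ((z^2 - c : ℤ) : ZMod 5) = 0 → z^2 % 5 = c % 5 := by
    intro z c h
    rw [ZMod.intCast_zmod_eq_zero_iff_dvd] at h
    omega
  rcases zkey5' _ _ hsum hnd with ⟨h1, h2⟩ | ⟨h1, h2⟩
  · refine ⟨x, y, hxy', ?_, ?_⟩
    · have := key x 1 (by push_cast; rw [h1]; ring)
      omega
    · have := key y 4 (by push_cast; rw [h2]; ring)
      omega
  · refine ⟨y, x, by linarith, ?_, ?_⟩
    · have := key y 1 (by push_cast; rw [h2]; ring)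
      omega
    · have := key x 4 (by push_cast; rw [h1]; ring)
      omega
end
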